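/- Let p : ℂ⁴ → ℂ be a homogeneous polynomial of odd degree d that is not identically zero. Then there exists a nonzero real vector (x₀, x₁, x₂, x₃) ∈ ℝ⁴ with p(x₀, x₁, x₂, x₃) = 0. -/

import Mathlib

/-!
Restricted to the hyperplane `x₃ = 0`, a homogeneous polynomial of odd degree is an odd
continuous map `ℝ³ → ℂ ≅ ℝ²`, so it vanishes at a nonzero point by the Borsuk–Ulam theorem.
That case of Borsuk–Ulam is proved with the exponential covering `ℂ → ℂ \ {0}`: a
nonvanishing `f` would have a continuous logarithm `L` on the (simply connected) upper
hemisphere, and on the equator `L (-u) - L u` would be a continuous branch of `log (-1)`,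
hence a constant equal to its own negative, which is impossible.
-/

open Complex Function

theorem MvPolynomial.IsHomogeneous.eval_const_mul {σ R : Type*} [CommSemiring R]
    {φ : MvPolynomial σ R} {n : ℕ} (hφ : φ.IsHomogeneous n) (c : R) (x : σ → R) :
    eval (fun i => c * x i) φ = c ^ n * eval x φ := by
  simp only [eval_eq, Finset.mul_sum]
  refine Finset.sum_congr rfl fun s hs => ?_
  rw [hφ.degree_eq_sum_deg_support hs, ← Finset.prod_pow_eq_pow_sum]
  simp only [mul_pow, Finset.prod_mul_distrib]
  ring

theorem MvPolynomial.IsHomogeneous.eval_neg {σ R : Type*} [CommRing R]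
    {φ : MvPolynomial σ R} {n : ℕ} (hφ : φ.IsHomogeneous n) (hn : Odd n) (x : σ → R) :
    eval (-x) φ = -eval x φ := by
  have h := hφ.eval_const_mul (-1) x
  simp only [neg_one_mul, hn.neg_one_pow] at h
  exact h

theorem Complex.exists_continuous_exp_eq {A : Type*} [TopologicalSpace A]
    [SimplyConnectedSpace A] [LocallyPathConnectedSpace A] {f : A → ℂ} (hf : Continuous f)
    (hf0 : ∀ a, f a ≠ 0) : ∃ L : A → ℂ, Continuous L ∧ ∀ a, exp (L a) = f a := by
  obtain ⟨a₀⟩ := (inferInstance : Nonempty A)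
  obtain ⟨L, ⟨-, hL⟩, -⟩ := isCoveringMapOn_exp.existsUnique_continuousMap_lifts ⟨f, hf⟩
    (exp_log (hf0 a₀)) hf0
  exact ⟨L, L.continuous, congrFun hL⟩

theorem Complex.not_antiperiodic_exp_comp {ψ : ℝ → ℂ} (hψ : Continuous ψ) {a : ℝ}
    (hper : Periodic ψ (2 * a)) : ¬Antiperiodic (exp ∘ ψ) a := by
  intro hanti
  -- `h` is a continuous branch of `log (-1)`, hence constant, while periodicity gives `h a = -h 0`.
  set h : ℝ → ℂ := fun θ => ψ (θ + a) - ψ θ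
  have hexp : ∀ θ, exp (h θ) = -1 := fun θ => by
    simp only [h, exp_sub, show exp (ψ (θ + a)) = -exp (ψ θ) from hanti θ, neg_div,
      div_self (exp_ne_zero _)]
  have hconst : h a = h 0 :=
    isCoveringMap_exp.const_of_comp (by fun_prop) (fun θ θ' => Subtype.ext (by simp [hexp])) a 0
  have hflip : h a = -h 0 := by
    have hψ2a : ψ (a + a) = ψ 0 := by simpa [two_mul] using hper 0
    simp only [h, hψ2a, zero_add]
    ring
  have h0 : h 0 = 0 := self_eq_neg.mp (hconst.symm.trans hflip)
  have h1 := hexp 0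
  rw [h0, exp_zero] at h1
  norm_num at h1

theorem exists_ne_zero_eq_zero_of_odd {f : (Fin 3 → ℝ) → ℂ} (hf : ContinuousOn f {0}ᶜ)
    (hodd : ∀ x, f (-x) = -f x) : ∃ x ≠ 0, f x = 0 := by
  by_contra! hne
  -- `φ` avoids `0` and maps the unit circle onto the equator `{x₂ = 0}`, where it is odd.
  set φ : ℝ × ℝ → Fin 3 → ℝ := fun u => ![u.1, u.2, 1 - u.1 ^ 2 - u.2 ^ 2]
  have hφ0 : ∀ u, φ u ≠ 0 := fun u hu => by
    obtain ⟨h0, h1, h2⟩ : u.1 = 0 ∧ u.2 = 0 ∧ 1 - u.1 ^ 2 - u.2 ^ 2 = 0 := by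
      simpa [φ, funext_iff, Fin.forall_fin_succ] using hu
    simp [h0, h1] at h2
  obtain ⟨L, hL, hexpL⟩ := exists_continuous_exp_eq (hf.comp_continuous (by fun_prop) hφ0)
    fun u => hne _ (hφ0 u)
  set c : ℝ → ℝ × ℝ := fun θ => (Real.cos θ, Real.sin θ)
  have hc_anti : ∀ θ, φ (c (θ + Real.pi)) = -φ (c θ) := fun θ => by
    have h2 : 1 - Real.cos θ ^ 2 - Real.sin θ ^ 2 = 0 := by linarith [Real.cos_sq_add_sin_sq θ]
    simp [φ, c, Real.cos_add_pi, Real.sin_add_pi, h2]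
  refine not_antiperiodic_exp_comp (hL.comp (by fun_prop : Continuous c)) (a := Real.pi)
    (fun θ => by simp [c, Real.cos_add_two_pi, Real.sin_add_two_pi]) fun θ => ?_
  simp only [comp_apply, hexpL, hc_anti, hodd]

theorem odd_degree_homogeneous_has_real_zero_general
    (p : MvPolynomial (Fin 4) ℂ) (d : ℕ) (hd : Odd d)
    (hhom : p.IsHomogeneous d) :
    ∃ x : Fin 4 → ℝ, x ≠ 0 ∧ MvPolynomial.eval (fun i => (x i : ℂ)) p = 0 := by
  set ι : (Fin 3 → ℝ) → Fin 4 → ℝ := fun y => ![y 0, y 1, y 2, 0]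
  have hι_neg : ∀ y i, ((ι (-y) i : ℝ) : ℂ) = -(ι y i : ℂ) := fun y i => by
    fin_cases i <;> simp [ι]
  have hι_ne : ∀ y, y ≠ 0 → ι y ≠ 0 := fun y hy hιy => hy <| by
    simpa [ι, funext_iff, Fin.forall_fin_succ] using hιy
  have hcont : Continuous fun y => MvPolynomial.eval (fun i => (ι y i : ℂ)) p :=
    (MvPolynomial.continuous_eval p).comp (by fun_prop)
  obtain ⟨y, hy, hpy⟩ := exists_ne_zero_eq_zero_of_odd hcont.continuousOn fun y => by
    simp only [hι_neg]
    exact hhom.eval_neg hd _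
  exact ⟨ι y, hι_ne y hy, hpy⟩

/-- A nonzero homogeneous polynomial of odd degree on `ℂ⁴` has a nonzero real zero. -/
theorem odd_degree_homogeneous_has_real_zero
    (p : MvPolynomial (Fin 4) ℂ) (d : ℕ) (hd : Odd d)
    (hhom : p.IsHomogeneous d) (hp : p ≠ 0) :
    ∃ x : Fin 4 → ℝ, x ≠ 0 ∧ MvPolynomial.eval (fun i => (x i : ℂ)) p = 0 :=
  odd_degree_homogeneous_has_real_zero_general p d hd hhom
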